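/- arXiv:2011.05408 — 6 statements merged into one kernel-verified Lean document; each statement's English description precedes it below -/
import Mathlib

section
/- Suppose R₀ = (Λλ/(μσ))·φ'(0) > 1. Then there exists a unique pair (u*, v*) with u* > 0 and v* > 0 satisfying Λ - μu* - λu*φ(v*) = 0 and λu*φ(v*) - σv* = 0; moreover v* ∈ (0, Λ/σ₀) where σ₀ = min(σ, μ), and u* = σv*/(λφ(v*)). -/
/-!
Eliminating `u = σv / (λφ(v))` turns the equilibrium system into the scalar equation
`g(v) = μσ` for `g(v) = (φ(v)/v) · λ(Λ - σv)` (`sisBalance`) on `(0, Λ/σ)`. Since `φ(v)/v` is antitone (this is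
`vφ'(v) ≤ φ(v)`) and positive, `g` is strictly antitone there, which gives uniqueness. It tends to
`φ'(0)λΛ = μσR₀ > μσ` as `v → 0⁺` and vanishes at `Λ/σ`, so the intermediate value theorem gives
existence. Finally `v* < Λ/σ ≤ Λ/σ₀`.
-/

open Set Filter Topology

lemma AntitoneOn.mul_strictAntiOn {α β : Type*} [Preorder α] [Semiring β] [PartialOrder β]
    [IsStrictOrderedRing β] {f g : α → β} {s : Set α} (hf : AntitoneOn f s) (hg : StrictAntiOn g s)
    (hf0 : ∀ x ∈ s, 0 < f x) (hg0 : ∀ x ∈ s, 0 < g x) : StrictAntiOn (fun x => f x * g x) s :=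
  fun a ha b hb hab =>
    calc f b * g b ≤ f a * g b := mul_le_mul_of_nonneg_right (hf ha hb hab.le) (hg0 b hb).le
      _ < f a * g a := mul_lt_mul_of_pos_left (hg ha hb hab) (hf0 a ha)

lemma exists_mem_Ioo_eq_of_tendsto_nhdsGT {g : ℝ → ℝ} {a b L c : ℝ} (hab : a < b)
    (hg : ContinuousOn g (Ioc a b)) (hlim : Tendsto g (𝓝[>] a) (𝓝 L)) (hcL : c < L)
    (hgb : g b < c) : ∃ v ∈ Ioo a b, g v = c := by
  obtain ⟨v₀, hcv₀, hv₀⟩ := ((hlim.eventually_const_lt hcL).and (Ioo_mem_nhdsGT hab)).exists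
  obtain ⟨v, hv, hgv⟩ := intermediate_value_Ioo' hv₀.2.le
    (hg.mono (Icc_subset_Ioc_iff hv₀.2.le |>.mpr ⟨hv₀.1, le_rfl⟩)) ⟨hgb, hcv₀⟩
  exact ⟨v, ⟨hv₀.1.trans hv.1, hv.2⟩, hgv⟩

section Incidence

variable {φ : ℝ → ℝ}

lemma pos_of_deriv_pos (hφ : ContinuousOn φ (Ici 0)) (hφ0 : φ 0 = 0)
    (hderiv : ∀ v, 0 < v → 0 < deriv φ v) {v : ℝ} (hv : 0 < v) : 0 < φ v := by
  have hmono : StrictMonoOn φ (Ici 0) :=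
    strictMonoOn_of_deriv_pos (convex_Ici 0) hφ (by rw [interior_Ici]; exact hderiv)
  simpa only [hφ0] using hmono self_mem_Ici hv.le hv

lemma antitoneOn_div_self (hφ : ∀ v, 0 < v → DifferentiableAt ℝ φ v)
    (hle : ∀ v, 0 < v → v * deriv φ v ≤ φ v) : AntitoneOn (fun v => φ v / v) (Ioi 0) := by
  have hdiv : ∀ v ∈ Ioi (0:ℝ), DifferentiableAt ℝ (fun v => φ v / v) v :=
    fun v hv => (hφ v hv).div differentiableAt_id hv.ne'
  refine antitoneOn_of_deriv_nonpos (convex_Ioi 0)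
    (fun v hv => (hdiv v hv).continuousAt.continuousWithinAt)
    (fun v hv => (hdiv v (interior_subset hv)).differentiableWithinAt) fun v hv => ?_
  rw [interior_Ioi] at hv
  rw [deriv_fun_div (hφ v hv) differentiableAt_fun_id hv.ne', deriv_id'']
  exact div_nonpos_of_nonpos_of_nonneg (by linarith [hle v hv]) (sq_nonneg v)

lemma tendsto_div_self_nhdsGT_zero {d : ℝ} (hφ : HasDerivAt φ d 0) (hφ0 : φ 0 = 0) :
    Tendsto (fun v => φ v / v) (𝓝[>] 0) (𝓝 d) := by
  simpa only [zero_add, hφ0, sub_zero, smul_eq_mul, inv_mul_eq_div] using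
    hφ.tendsto_slope_zero_right

end Incidence

noncomputable def sisBalance (φ : ℝ → ℝ) (Λ σ lam v : ℝ) : ℝ := φ v / v * (lam * (Λ - σ * v))

section SIS

variable {φ : ℝ → ℝ} {Λ μ σ lam : ℝ}

lemma sis_equilibrium_iff {u v : ℝ} (hlam : 0 < lam) (hv : 0 < v) (hφv : 0 < φ v) :
    (Λ - μ * u - lam * u * φ v = 0 ∧ lam * u * φ v - σ * v = 0) ↔
      u = σ * v / (lam * φ v) ∧ sisBalance φ Λ σ lam v = μ * σ := by
  unfold sisBalance
  constructor
  · rintro ⟨h₁, h₂⟩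
    refine ⟨by field_simp; linarith, ?_⟩
    field_simp
    linear_combination (lam * φ v) * h₁ + (μ + lam * φ v) * h₂
  · rintro ⟨rfl, h⟩
    field_simp at h ⊢
    exact ⟨by linear_combination h, by ring⟩

lemma strictAntiOn_sisBalance (hφ : ∀ v, 0 < v → DifferentiableAt ℝ φ v)
    (hle : ∀ v, 0 < v → v * deriv φ v ≤ φ v) (hpos : ∀ v, 0 < v → 0 < φ v)
    (hσ : 0 < σ) (hlam : 0 < lam) : StrictAntiOn (sisBalance φ Λ σ lam) (Ioo 0 (Λ / σ)) := by
  refine AntitoneOn.mul_strictAntiOn ((antitoneOn_div_self hφ hle).mono Ioo_subset_Ioi_self)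
    (fun a _ b _ hab => ?_) (fun v hv => div_pos (hpos v hv.1) hv.1) fun v hv => ?_
  · gcongr
  · have := (lt_div_iff₀ hσ).mp hv.2
    exact mul_pos hlam (by linarith)

lemma exists_sisBalance_eq (hφ : ∀ v ∈ Ici (0:ℝ), DifferentiableAt ℝ φ v) (hφ0 : φ 0 = 0)
    (hΛ : 0 < Λ) (hμ : 0 < μ) (hσ : 0 < σ) (hR₀ : μ * σ < deriv φ 0 * (lam * Λ)) :
    ∃ v ∈ Ioo 0 (Λ / σ), sisBalance φ Λ σ lam v = μ * σ := by
  have hcont : Continuous fun v : ℝ => lam * (Λ - σ * v) := by fun_prop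
  refine exists_mem_Ioo_eq_of_tendsto_nhdsGT (div_pos hΛ hσ)
    (fun v hv => (((hφ v hv.1.le).continuousAt.div continuousAt_id hv.1.ne').mul
      hcont.continuousAt).continuousWithinAt) ?_ hR₀ ?_
  · have hlim := (tendsto_div_self_nhdsGT_zero (hφ 0 self_mem_Ici).hasDerivAt hφ0).mul
      ((hcont.tendsto 0).mono_left nhdsWithin_le_nhds)
    rw [mul_zero, sub_zero] at hlim
    exact hlim
  · simp only [sisBalance, mul_div_cancel₀ Λ hσ.ne', sub_self, mul_zero]
    positivity

end SIS

/-- If `R₀ = (Λλ/(μσ)) φ'(0) > 1`, the SIS system has a unique endemic equilibrium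
`(u*, v*)` with `u*, v* > 0`; moreover `v* ∈ (0, Λ/σ₀)` with `σ₀ = min σ μ`, and
`u* = σ v* / (λ φ(v*))`. -/
theorem stmt_3 (φ : ℝ → ℝ) (Λ μ σ lam : ℝ)
    (hΛ : 0 < Λ) (hμ : 0 < μ) (hσ : 0 < σ) (hlam : 0 < lam)
    (hdiff : ∀ v ∈ Set.Ici (0:ℝ), DifferentiableAt ℝ φ v)
    (hφ0 : φ 0 = 0)
    (hinc : ∀ v : ℝ, 0 < v → 0 < v * deriv φ v ∧ v * deriv φ v ≤ φ v)
    (hR0 : 1 < Λ * lam / (μ * σ) * deriv φ 0) :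
    ∃ u v : ℝ, 0 < u ∧ 0 < v ∧
      Λ - μ * u - lam * u * φ v = 0 ∧ lam * u * φ v - σ * v = 0 ∧
      v < Λ / min σ μ ∧ u = σ * v / (lam * φ v) ∧
      (∀ u' v' : ℝ, 0 < u' → 0 < v' →
        Λ - μ * u' - lam * u' * φ v' = 0 → lam * u' * φ v' - σ * v' = 0 →
        u' = u ∧ v' = v) := by
  have hdiff' : ∀ v, 0 < v → DifferentiableAt ℝ φ v := fun v hv => hdiff v hv.le
  have hpos : ∀ v, 0 < v → 0 < φ v := fun _ =>
    pos_of_deriv_pos (fun v hv => (hdiff v hv).continuousAt.continuousWithinAt) hφ0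
      fun v hv => pos_of_mul_pos_right (hinc v hv).1 hv.le
  have hR₀ : μ * σ < deriv φ 0 * (lam * Λ) := by
    rw [div_mul_eq_mul_div, one_lt_div (by positivity)] at hR0
    linarith
  obtain ⟨v, hv, hgv⟩ := exists_sisBalance_eq hdiff hφ0 hΛ hμ hσ hR₀
  have hv₀ := hv.1
  have hφv := hpos v hv₀
  obtain ⟨h₁, h₂⟩ := (sis_equilibrium_iff hlam hv₀ hφv).mpr ⟨rfl, hgv⟩
  refine ⟨_, v, by positivity, hv₀, h₁, h₂,
    hv.2.trans_le (div_le_div_of_nonneg_left hΛ.le (lt_min hσ hμ) (min_le_left σ μ)), rfl,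
    fun u' v' hu' hv' h₁' h₂' => ?_⟩
  have hv'Λ : v' < Λ / σ := by
    rw [lt_div_iff₀ hσ]
    linarith [mul_pos hμ hu']
  obtain ⟨rfl, hgv'⟩ := (sis_equilibrium_iff hlam hv' (hpos v' hv')).mp ⟨h₁', h₂'⟩
  obtain rfl : v' = v := (strictAntiOn_sisBalance hdiff' (fun v hv => (hinc v hv).2) hpos hσ
    hlam).injOn ⟨hv', hv'Λ⟩ hv (hgv'.trans hgv.symm)
  exact ⟨rfl, rfl⟩
end

section
/- Suppose R₀ = (Λλ/(μσ))·φ'(0) ≤ 1, where φ is differentiable on [0,∞) with φ(0) = 0 and 0 < v·φ'(v) ≤ φ(v) for every v > 0. Then the system Λ - μu - λuφ(v) = 0, λuφ(v) - σv = 0 has no solution (u,v) with v > 0; equivalently, h(v) = (Λλ/(μσ))·(φ(v)/v) - (λ/μ)·φ(v) - 1 < 0 for every v > 0, so the disease-free equilibrium E₀ = (Λ/μ, 0) is the only steady state. -/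
/-!
The condition `v φ'(v) ≤ φ(v)` says that `(φ(v)/v)' = (v φ'(v) - φ(v)) / v² ≤ 0`, so the chord
slope `φ(v)/v` decreases on `(0, ∞)` towards its limit `φ'(0)` at the origin; hence
`φ(v)/v ≤ φ'(0)` and the first term of `h(v)` is at most `R₀ ≤ 1`, while `(λ/μ) φ(v) > 0`.
Eliminating `u` from the equilibrium equations gives `h(v) = 0` for any equilibrium with `v ≠ 0`.
-/

open Set Filter Topology

theorem antitoneOn_div_self_of_mul_deriv_le {φ : ℝ → ℝ}
    (hdiff : ∀ t > 0, DifferentiableAt ℝ φ t) (hle : ∀ t > 0, t * deriv φ t ≤ φ t) :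
    AntitoneOn (fun t => φ t / t) (Ioi 0) := by
  have hquot : ∀ t ∈ Ioi (0 : ℝ),
      HasDerivAt (fun t => φ t / t) ((deriv φ t * t - φ t * 1) / t ^ 2) t := fun t ht =>
    (hdiff t ht).hasDerivAt.div (hasDerivAt_id t) (ne_of_gt ht)
  refine antitoneOn_of_deriv_nonpos (convex_Ioi 0)
    (fun t ht => (hquot t ht).continuousAt.continuousWithinAt) ?_ ?_
  · rw [interior_Ioi]
    exact fun t ht => (hquot t ht).differentiableAt.differentiableWithinAt
  · rw [interior_Ioi]
    intro t ht
    rw [(hquot t ht).deriv]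
    have := hle t ht
    exact div_nonpos_of_nonpos_of_nonneg (by linarith) (sq_nonneg t)

theorem div_le_of_hasDerivWithinAt_of_antitoneOn {φ : ℝ → ℝ} {d : ℝ} (hφ0 : φ 0 = 0)
    (hd : HasDerivWithinAt φ d (Ioi 0) 0) (hanti : AntitoneOn (fun t => φ t / t) (Ioi 0))
    {v : ℝ} (hv : 0 < v) : φ v / v ≤ d := by
  have hslope : Tendsto (slope φ 0) (𝓝[>] 0) (𝓝 d) :=
    (hasDerivWithinAt_iff_tendsto_slope' (lt_irrefl 0)).mp hd
  rw [show slope φ 0 = fun t => φ t / t by ext t; simp [slope_def_field, hφ0]] at hslope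
  refine ge_of_tendsto hslope ?_
  filter_upwards [Ioc_mem_nhdsGT hv] with t ht
  exact hanti ht.1 hv ht.2

theorem sis_threshold_eq_zero_of_equilibrium {Λ μ σ lam u v p : ℝ}
    (hμ : μ ≠ 0) (hσ : σ ≠ 0) (hv : v ≠ 0)
    (hu : Λ - μ * u - lam * u * p = 0) (hinf : lam * u * p - σ * v = 0) :
    Λ * lam / (μ * σ) * (p / v) - lam / μ * p - 1 = 0 := by
  field_simp
  linear_combination lam * p * hu + (μ + lam * p) * hinf

/-- If `R₀ = (Λλ/(μσ)) φ'(0) ≤ 1`, then `h(v) < 0` for every `v > 0` and the SIS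
equilibrium equations have no solution with `v > 0`: the disease-free equilibrium is the
only steady state. -/
theorem stmt_7 (φ : ℝ → ℝ) (Λ μ σ lam : ℝ)
    (hΛ : 0 < Λ) (hμ : 0 < μ) (hσ : 0 < σ) (hlam : 0 < lam)
    (hdiff : ∀ v ∈ Set.Ici (0:ℝ), DifferentiableAt ℝ φ v)
    (hφ0 : φ 0 = 0)
    (hinc : ∀ v : ℝ, 0 < v → 0 < v * deriv φ v ∧ v * deriv φ v ≤ φ v)
    (hR0 : Λ * lam / (μ * σ) * deriv φ 0 ≤ 1) :
    (∀ v : ℝ, 0 < v → Λ * lam / (μ * σ) * (φ v / v) - lam / μ * φ v - 1 < 0) ∧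
    (∀ u v : ℝ, 0 < v →
      ¬ (Λ - μ * u - lam * u * φ v = 0 ∧ lam * u * φ v - σ * v = 0)) := by
  have hanti : AntitoneOn (fun t => φ t / t) (Ioi 0) :=
    antitoneOn_div_self_of_mul_deriv_le (fun t ht => hdiff t (le_of_lt ht))
      (fun t ht => (hinc t ht).2)
  have hslope : ∀ v > 0, φ v / v ≤ deriv φ 0 := fun v hv =>
    div_le_of_hasDerivWithinAt_of_antitoneOn hφ0
      (hdiff 0 self_mem_Ici).hasDerivAt.hasDerivWithinAt hanti hv
  have hneg : ∀ v : ℝ, 0 < v → Λ * lam / (μ * σ) * (φ v / v) - lam / μ * φ v - 1 < 0 := by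
    intro v hv
    have hφv : 0 < φ v := (hinc v hv).1.trans_le (hinc v hv).2
    have hfirst : Λ * lam / (μ * σ) * (φ v / v) ≤ Λ * lam / (μ * σ) * deriv φ 0 :=
      mul_le_mul_of_nonneg_left (hslope v hv) (by positivity)
    have hsecond : 0 < lam / μ * φ v := by positivity
    linarith
  refine ⟨hneg, fun u v hv ⟨hu, hinf⟩ => (hneg v hv).ne ?_⟩
  exact sis_threshold_eq_zero_of_equilibrium hμ.ne' hσ.ne' hv.ne' hu hinf
end

section
/- Let (u*, v*) with u*, v* > 0 satisfy Λ = λu*φ(v*) + μu* and σ = λu*φ(v*)/v*, where φ satisfies 0 < v·φ'(v) ≤ φ(v) for v > 0. Then the trace of the Jacobian J(u*,v*) = [[-λφ(v*) - μ, -λu*φ'(v*)], [λφ(v*), λu*φ'(v*) - σ]] satisfies tr J(u*,v*) = -Λ/u* - λu*(φ(v*)/v* - φ'(v*)) < 0. -/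
theorem trace_jacobian_of_equilibrium {Λ μ σ lam u v p d : ℝ} (hu : u ≠ 0) (hv : v ≠ 0)
    (hΛ : Λ = lam * u * p + μ * u) (hσ : σ = lam * u * p / v) :
    Matrix.trace !![-(lam * p) - μ, -(lam * u * d); lam * p, lam * u * d - σ]
      = -(Λ / u) - lam * u * (p / v - d) := by
  rw [Matrix.trace_fin_two_of, hΛ, hσ]
  field_simp
  ring

theorem div_sub_nonneg_of_mul_le {v a b : ℝ} (hv : 0 < v) (h : v * a ≤ b) : 0 ≤ b / v - a :=
  sub_nonneg.mpr ((le_div_iff₀ hv).mpr (by linarith))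

theorem stmt_10_general (φ : ℝ → ℝ) (Λ μ σ lam ustar vstar : ℝ)
    (hΛ : 0 < Λ) (hlam : 0 < lam)
    (hu : 0 < ustar) (hv : 0 < vstar)
    (hinc : ∀ v : ℝ, 0 < v → 0 < v * deriv φ v ∧ v * deriv φ v ≤ φ v)
    (heq1 : Λ = lam * ustar * φ vstar + μ * ustar)
    (heq2 : σ = lam * ustar * φ vstar / vstar) :
    Matrix.trace !![-(lam * φ vstar) - μ, -(lam * ustar * deriv φ vstar);
        lam * φ vstar, lam * ustar * deriv φ vstar - σ]
      = -(Λ / ustar) - lam * ustar * (φ vstar / vstar - deriv φ vstar) ∧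
    Matrix.trace !![-(lam * φ vstar) - μ, -(lam * ustar * deriv φ vstar);
        lam * φ vstar, lam * ustar * deriv φ vstar - σ] < 0 := by
  have htr := trace_jacobian_of_equilibrium (d := deriv φ vstar) hu.ne' hv.ne' heq1 heq2
  refine ⟨htr, htr ▸ ?_⟩
  have hgap : 0 ≤ φ vstar / vstar - deriv φ vstar :=
    div_sub_nonneg_of_mul_le hv (hinc vstar hv).2
  have hloss : 0 ≤ lam * ustar * (φ vstar / vstar - deriv φ vstar) := by positivity
  have hinflow : 0 < Λ / ustar := div_pos hΛ hu
  linarith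

/-- At a positive endemic equilibrium `(u*, v*)`, the trace of the Jacobian equals
`-Λ/u* - λu*(φ(v*)/v* - φ'(v*))` and is negative. -/
theorem stmt_10 (φ : ℝ → ℝ) (Λ μ σ lam ustar vstar : ℝ)
    (hΛ : 0 < Λ) (hμ : 0 < μ) (hσ : 0 < σ) (hlam : 0 < lam)
    (hu : 0 < ustar) (hv : 0 < vstar)
    (hdiff : ∀ v ∈ Set.Ioi (0:ℝ), DifferentiableAt ℝ φ v)
    (hinc : ∀ v : ℝ, 0 < v → 0 < v * deriv φ v ∧ v * deriv φ v ≤ φ v)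
    (heq1 : Λ = lam * ustar * φ vstar + μ * ustar)
    (heq2 : σ = lam * ustar * φ vstar / vstar) :
    Matrix.trace !![-(lam * φ vstar) - μ, -(lam * ustar * deriv φ vstar);
        lam * φ vstar, lam * ustar * deriv φ vstar - σ]
      = -(Λ / ustar) - lam * ustar * (φ vstar / vstar - deriv φ vstar) ∧
    Matrix.trace !![-(lam * φ vstar) - μ, -(lam * ustar * deriv φ vstar);
        lam * φ vstar, lam * ustar * deriv φ vstar - σ] < 0 :=
  stmt_10_general φ Λ μ σ lam ustar vstar hΛ hlam hu hv hinc heq1 heq2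
end

section
/- Let (u*, v*) with u*, v* > 0 satisfy Λ = λu*φ(v*) + μu* and σ = λu*φ(v*)/v*, where φ satisfies 0 < v·φ'(v) ≤ φ(v) for v > 0. Then the determinant of the Jacobian J(u*,v*) = [[-λφ(v*) - μ, -λu*φ'(v*)], [λφ(v*), λu*φ'(v*) - σ]] satisfies det J(u*,v*) = λσφ(v*) + μσ - μλu*φ'(v*) = λ²u*φ(v*)²/v* + μλu*(φ(v*)/v* - φ'(v*)) > 0. Consequently every complex eigenvalue of J(u*,v*) has negative real part. -/
lemma spec2 (M : Matrix (Fin 2) (Fin 2) ℂ) (z : ℂ) (h : z ∈ spectrum ℂ M) :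
    (z - M 0 0) * (z - M 1 1) - M 0 1 * M 1 0 = 0 := by
  rw [spectrum.mem_iff] at h
  by_contra hne
  apply h
  rw [Matrix.isUnit_iff_isUnit_det, isUnit_iff_ne_zero]
  simpa [Matrix.det_fin_two, Matrix.algebraMap_matrix_apply, sub_mul, mul_sub] using hne

lemma quadre (a b c d : ℝ) (z : ℂ) (hT : a + d < 0) (hD : 0 < a*d - b*c)
    (h : (z - (a:ℂ)) * (z - (d:ℂ)) - (b:ℂ) * (c:ℂ) = 0) : z.re < 0 := by
  have h' := h
  simp only [Complex.ext_iff, Complex.sub_re, Complex.mul_re, Complex.sub_im,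
    Complex.mul_im, Complex.ofReal_re, Complex.ofReal_im, Complex.zero_re,
    Complex.zero_im, sub_zero] at h'
  obtain ⟨h1, h2⟩ := h'
  set x := z.re; set y := z.im
  have him : y * (2*x - (a+d)) = 0 := by ring_nf; ring_nf at h2; linarith
  rcases mul_eq_zero.mp him with hy | hx
  · nlinarith [sq_nonneg x, sq_nonneg (x - a), sq_nonneg (x-d)]
  · nlinarith

/-- At a positive endemic equilibrium `(u*, v*)`, the determinant of the Jacobian equals
`λσφ(v*) + μσ - μλu*φ'(v*) = λ²u*φ(v*)²/v* + μλu*(φ(v*)/v* - φ'(v*))`, is positive, and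
every complex eigenvalue of the Jacobian has negative real part. -/
theorem stmt_11 (φ : ℝ → ℝ) (Λ μ σ lam ustar vstar : ℝ)
    (hΛ : 0 < Λ) (hμ : 0 < μ) (hσ : 0 < σ) (hlam : 0 < lam)
    (hu : 0 < ustar) (hv : 0 < vstar)
    (hdiff : ∀ v ∈ Set.Ioi (0:ℝ), DifferentiableAt ℝ φ v)
    (hinc : ∀ v : ℝ, 0 < v → 0 < v * deriv φ v ∧ v * deriv φ v ≤ φ v)
    (heq1 : Λ = lam * ustar * φ vstar + μ * ustar)
    (heq2 : σ = lam * ustar * φ vstar / vstar) :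
    Matrix.det !![-(lam * φ vstar) - μ, -(lam * ustar * deriv φ vstar);
        lam * φ vstar, lam * ustar * deriv φ vstar - σ]
      = lam * σ * φ vstar + μ * σ - μ * lam * ustar * deriv φ vstar ∧
    lam * σ * φ vstar + μ * σ - μ * lam * ustar * deriv φ vstar
      = lam ^ 2 * ustar * (φ vstar) ^ 2 / vstar
        + μ * lam * ustar * (φ vstar / vstar - deriv φ vstar) ∧
    0 < Matrix.det !![-(lam * φ vstar) - μ, -(lam * ustar * deriv φ vstar);
        lam * φ vstar, lam * ustar * deriv φ vstar - σ] ∧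
    (∀ z : ℂ, z ∈ spectrum ℂ
        ((!![-(lam * φ vstar) - μ, -(lam * ustar * deriv φ vstar);
            lam * φ vstar, lam * ustar * deriv φ vstar - σ]).map Complex.ofReal) →
      z.re < 0) := by
  obtain ⟨hd1, hd2⟩ := hinc vstar hv
  have hφ : 0 < φ vstar := lt_of_lt_of_le hd1 hd2
  have hd' : deriv φ vstar ≤ φ vstar / vstar := by
    rw [le_div_iff₀ hv]; nlinarith
  have hdet : Matrix.det !![-(lam * φ vstar) - μ, -(lam * ustar * deriv φ vstar);
        lam * φ vstar, lam * ustar * deriv φ vstar - σ]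
      = lam * σ * φ vstar + μ * σ - μ * lam * ustar * deriv φ vstar := by
    rw [Matrix.det_fin_two_of]; ring
  have he2 : lam * σ * φ vstar + μ * σ - μ * lam * ustar * deriv φ vstar
      = lam ^ 2 * ustar * (φ vstar) ^ 2 / vstar
        + μ * lam * ustar * (φ vstar / vstar - deriv φ vstar) := by
    rw [heq2]; field_simp; ring
  have hpos : 0 < lam * σ * φ vstar + μ * σ - μ * lam * ustar * deriv φ vstar := by
    rw [he2]
    have h1 : 0 < lam ^ 2 * ustar * (φ vstar) ^ 2 / vstar := by positivity
    have h2 : 0 ≤ μ * lam * ustar * (φ vstar / vstar - deriv φ vstar) := by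
      have := sub_nonneg.mpr hd'
      positivity
    linarith
  refine ⟨hdet, he2, by rw [hdet]; exact hpos, ?_⟩
  intro z hz
  have hs := spec2 _ z hz
  simp only [Matrix.map_apply, Matrix.of_apply, Matrix.cons_val', Matrix.cons_val_zero,
    Matrix.cons_val_one, Matrix.head_cons, Matrix.empty_val', Matrix.cons_val_fin_one,
    Matrix.head_fin_const] at hs
  have hT : (-(lam * φ vstar) - μ) + (lam * ustar * deriv φ vstar - σ) < 0 := by
    have : lam * ustar * deriv φ vstar ≤ σ := by
      rw [heq2, le_div_iff₀ hv]
      calc lam * ustar * deriv φ vstar * vstar = lam * ustar * (vstar * deriv φ vstar) := by ring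
        _ ≤ lam * ustar * φ vstar := by
            exact mul_le_mul_of_nonneg_left hd2 (by positivity)
    nlinarith
  have hD : 0 < (-(lam * φ vstar) - μ) * (lam * ustar * deriv φ vstar - σ)
      - (-(lam * ustar * deriv φ vstar)) * (lam * φ vstar) := by nlinarith
  refine quadre _ _ _ _ z hT hD ?_
  push_cast
  push_cast at hs
  linear_combination hs
end

section
/- Let (u*, v*) with u*, v* > 0 satisfy Λ = λu*φ(v*) + μu* and σ = λu*φ(v*)/v*, where φ satisfies 0 < v·φ'(v) ≤ φ(v) for v > 0, and let d₁, d₂ > 0 and κ ≥ 0. Set H₀ = -d₁λu*φ'(v*) + d₁σ + d₂λφ(v*) + d₂μ. Then H₀ ≥ d₂Λ/u* > 0, and the matrix J_κ = [[-d₁κ - λφ(v*) - μ, -λu*φ'(v*)], [λφ(v*), -d₂κ + λu*φ'(v*) - σ]] satisfies tr J_κ < 0 and det J_κ = d₁d₂κ² + H₀κ + (λσφ(v*) + μσ - μλu*φ'(v*)) > 0. -/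
/-!
The incidence condition `v φ'(v) ≤ φ(v)` at `v*`, together with `σ v* = λ u* φ(v*)`, gives
`b := λ u* φ'(v*) ≤ σ`, while `Λ / u* = λ φ(v*) + μ`. Hence, with `a := λ φ(v*) > 0`,
`J_κ = [[-(d₁κ + a + μ), -b], [a, -(d₂κ + (σ - b))]]` has both diagonal entries `≤ 0`, the
first one `< 0`, and `det J_κ = (d₁κ + a + μ)(d₂κ + (σ - b)) + a b > 0`.
-/

open Matrix

section Linearization

variable {R : Type*} [CommRing R]

theorem trace_linearization (d₁ d₂ κ a b μ σ : R) :
    trace !![-(d₁ * κ) - a - μ, -b; a, -(d₂ * κ) + b - σ]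
      = -((d₁ + d₂) * κ + (a + μ) + (σ - b)) := by
  rw [trace_fin_two_of]; ring

theorem det_linearization (d₁ d₂ κ a b μ σ : R) :
    det !![-(d₁ * κ) - a - μ, -b; a, -(d₂ * κ) + b - σ]
      = (d₁ * κ + (a + μ)) * (d₂ * κ + (σ - b)) + a * b := by
  rw [det_fin_two_of]; ring

variable [LinearOrder R] [IsStrictOrderedRing R] {d₁ d₂ κ a b μ σ : R}

theorem trace_linearization_neg (hd₁ : 0 ≤ d₁) (hd₂ : 0 ≤ d₂) (hκ : 0 ≤ κ) (ha : 0 < a)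
    (hμ : 0 ≤ μ) (hbσ : b ≤ σ) :
    trace !![-(d₁ * κ) - a - μ, -b; a, -(d₂ * κ) + b - σ] < 0 := by
  rw [trace_linearization, neg_neg_iff_pos]
  have : 0 ≤ (d₁ + d₂) * κ := mul_nonneg (add_nonneg hd₁ hd₂) hκ
  linarith

theorem det_linearization_pos (hd₁ : 0 ≤ d₁) (hd₂ : 0 ≤ d₂) (hκ : 0 ≤ κ) (ha : 0 < a)
    (hb : 0 < b) (hμ : 0 ≤ μ) (hbσ : b ≤ σ) :
    0 < det !![-(d₁ * κ) - a - μ, -b; a, -(d₂ * κ) + b - σ] := by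
  rw [det_linearization]
  have hσb : 0 ≤ σ - b := sub_nonneg.mpr hbσ
  positivity

end Linearization

theorem stmt_12_general (φ : ℝ → ℝ) (Λ μ σ lam ustar vstar d₁ d₂ κ : ℝ)
    (hΛ : 0 < Λ) (hμ : 0 < μ) (hlam : 0 < lam)
    (hu : 0 < ustar) (hv : 0 < vstar)
    (hd₁ : 0 < d₁) (hd₂ : 0 < d₂) (hκ : 0 ≤ κ)
    (hinc : ∀ v : ℝ, 0 < v → 0 < v * deriv φ v ∧ v * deriv φ v ≤ φ v)
    (heq1 : Λ = lam * ustar * φ vstar + μ * ustar)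
    (heq2 : σ = lam * ustar * φ vstar / vstar) :
    d₂ * Λ / ustar ≤ -(d₁ * lam * ustar * deriv φ vstar) + d₁ * σ + d₂ * (lam * φ vstar) + d₂ * μ ∧
    0 < d₂ * Λ / ustar ∧
    Matrix.trace !![-(d₁ * κ) - lam * φ vstar - μ, -(lam * ustar * deriv φ vstar);
        lam * φ vstar, -(d₂ * κ) + lam * ustar * deriv φ vstar - σ] < 0 ∧
    Matrix.det !![-(d₁ * κ) - lam * φ vstar - μ, -(lam * ustar * deriv φ vstar);
        lam * φ vstar, -(d₂ * κ) + lam * ustar * deriv φ vstar - σ]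
      = d₁ * d₂ * κ ^ 2
        + (-(d₁ * lam * ustar * deriv φ vstar) + d₁ * σ + d₂ * (lam * φ vstar) + d₂ * μ) * κ
        + (lam * σ * φ vstar + μ * σ - μ * lam * ustar * deriv φ vstar) ∧
    0 < Matrix.det !![-(d₁ * κ) - lam * φ vstar - μ, -(lam * ustar * deriv φ vstar);
        lam * φ vstar, -(d₂ * κ) + lam * ustar * deriv φ vstar - σ] := by
  obtain ⟨hvφ'_pos, hvφ'_le⟩ := hinc vstar hv
  have hφ' : 0 < deriv φ vstar := pos_of_mul_pos_right hvφ'_pos hv.le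
  have hφ : 0 < φ vstar := hvφ'_pos.trans_le hvφ'_le
  have hbσ : lam * ustar * deriv φ vstar ≤ σ := by
    rw [heq2, le_div_iff₀ hv, mul_assoc, mul_comm (deriv φ vstar)]
    exact mul_le_mul_of_nonneg_left hvφ'_le (by positivity)
  have hΛu : d₂ * Λ / ustar = d₂ * (lam * φ vstar + μ) := by
    rw [heq1]; field_simp
  refine ⟨?_, by positivity, trace_linearization_neg hd₁.le hd₂.le hκ (by positivity) hμ.le hbσ,
    by rw [det_fin_two_of]; ring,
    det_linearization_pos hd₁.le hd₂.le hκ (by positivity) (by positivity) hμ.le hbσ⟩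
  rw [hΛu]
  linarith [mul_le_mul_of_nonneg_left hbσ hd₁.le]

/-- At a positive endemic equilibrium, for any diffusion coefficients `d₁, d₂ > 0` and any
eigenmode `κ ≥ 0`, the quantity `H₀ = -d₁λu*φ'(v*) + d₁σ + d₂λφ(v*) + d₂μ` satisfies
`H₀ ≥ d₂Λ/u* > 0`, and the linearization matrix `J_κ` has negative trace and determinant
`d₁d₂κ² + H₀κ + (λσφ(v*) + μσ - μλu*φ'(v*)) > 0`. -/
theorem stmt_12 (φ : ℝ → ℝ) (Λ μ σ lam ustar vstar d₁ d₂ κ : ℝ)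
    (hΛ : 0 < Λ) (hμ : 0 < μ) (hσ : 0 < σ) (hlam : 0 < lam)
    (hu : 0 < ustar) (hv : 0 < vstar)
    (hd₁ : 0 < d₁) (hd₂ : 0 < d₂) (hκ : 0 ≤ κ)
    (hdiff : ∀ v ∈ Set.Ioi (0:ℝ), DifferentiableAt ℝ φ v)
    (hinc : ∀ v : ℝ, 0 < v → 0 < v * deriv φ v ∧ v * deriv φ v ≤ φ v)
    (heq1 : Λ = lam * ustar * φ vstar + μ * ustar)
    (heq2 : σ = lam * ustar * φ vstar / vstar) :
    d₂ * Λ / ustar ≤ -(d₁ * lam * ustar * deriv φ vstar) + d₁ * σ + d₂ * (lam * φ vstar) + d₂ * μ ∧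
    0 < d₂ * Λ / ustar ∧
    Matrix.trace !![-(d₁ * κ) - lam * φ vstar - μ, -(lam * ustar * deriv φ vstar);
        lam * φ vstar, -(d₂ * κ) + lam * ustar * deriv φ vstar - σ] < 0 ∧
    Matrix.det !![-(d₁ * κ) - lam * φ vstar - μ, -(lam * ustar * deriv φ vstar);
        lam * φ vstar, -(d₂ * κ) + lam * ustar * deriv φ vstar - σ]
      = d₁ * d₂ * κ ^ 2
        + (-(d₁ * lam * ustar * deriv φ vstar) + d₁ * σ + d₂ * (lam * φ vstar) + d₂ * μ) * κ
        + (lam * σ * φ vstar + μ * σ - μ * lam * ustar * deriv φ vstar) ∧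
    0 < Matrix.det !![-(d₁ * κ) - lam * φ vstar - μ, -(lam * ustar * deriv φ vstar);
        lam * φ vstar, -(d₂ * κ) + lam * ustar * deriv φ vstar - σ] :=
  stmt_12_general φ Λ μ σ lam ustar vstar d₁ d₂ κ hΛ hμ hlam hu hv hd₁ hd₂ hκ hinc heq1 heq2
end

section
/- Define L(x) = x - 1 - log x for x > 0. Let φ : ℝ → ℝ be differentiable on (0,∞) with 0 < v·φ'(v) ≤ φ(v) for every v > 0, and let v, v* > 0. Then L(φ(v)/φ(v*)) ≤ L(v/v*). -/
/-!
Write `r = φ v / φ v*` and `s = v / v*`. Since `φ' > 0`, `φ` is increasing, and since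
`v φ'(v) ≤ φ v`, `φ v / v` is decreasing; hence `r` lies between `1` and `s`.
As `L` decreases on `(0, 1]` and increases on `[1, ∞)`, this gives `L r ≤ L s`.
-/

open Set Real

/-- The hypothesis says that `r` lies between `1` and `s`. -/
lemma sub_one_sub_log_le_of_between {r s : ℝ} (hr : 0 < r) (hs : 0 < s)
    (hbetween : 0 ≤ (s - r) * (r - 1)) :
    r - 1 - log r ≤ s - 1 - log s := by
  have hlog : log (s / r) ≤ s / r - 1 := log_le_sub_one_of_pos (div_pos hs hr)
  rw [log_div hs.ne' hr.ne'] at hlog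
  have hquot : s / r - 1 ≤ s - r := by
    have : s - r - (s / r - 1) = (s - r) * (r - 1) / r := by field_simp
    linarith [div_nonneg hbetween hr.le]
  linarith

section Incidence

variable {φ : ℝ → ℝ}

lemma monotoneOn_Ioi_of_mul_deriv_pos (hdiff : DifferentiableOn ℝ φ (Ioi 0))
    (hpos : ∀ t, 0 < t → 0 < t * deriv φ t) :
    MonotoneOn φ (Ioi 0) := by
  refine monotoneOn_of_deriv_nonneg (convex_Ioi 0) hdiff.continuousOn
    (by rwa [interior_Ioi]) fun t ht => ?_
  rw [interior_Ioi] at ht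
  exact (pos_of_mul_pos_right (hpos t ht) (le_of_lt ht)).le

lemma antitoneOn_Ioi_div_self_of_mul_deriv_le (hdiff : DifferentiableOn ℝ φ (Ioi 0))
    (hle : ∀ t, 0 < t → t * deriv φ t ≤ φ t) :
    AntitoneOn (fun t => φ t / t) (Ioi 0) := by
  have hderiv : ∀ t ∈ Ioi (0 : ℝ),
      HasDerivAt (fun t => φ t / t) ((deriv φ t * t - φ t * 1) / t ^ 2) t := fun t ht =>
    ((hdiff.differentiableAt (isOpen_Ioi.mem_nhds ht)).hasDerivAt.div (hasDerivAt_id t)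
      (ne_of_gt ht))
  refine antitoneOn_of_deriv_nonpos (convex_Ioi 0)
    (fun t ht => (hderiv t ht).continuousAt.continuousWithinAt)
    (fun t ht => (hderiv t (interior_subset ht)).differentiableAt.differentiableWithinAt)
    fun t ht => ?_
  rw [interior_Ioi] at ht
  rw [(hderiv t ht).deriv]
  exact div_nonpos_of_nonpos_of_nonneg (by linarith [hle t ht]) (sq_nonneg t)

end Incidence

/-- With `L x = x - 1 - log x`, if `φ` is differentiable on `(0,∞)` and satisfies
`0 < v φ'(v) ≤ φ v` for all `v > 0`, then `L(φ v / φ v*) ≤ L(v / v*)` for all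
`v, v* > 0`. -/
theorem stmt_13 (φ : ℝ → ℝ)
    (hdiff : ∀ v ∈ Set.Ioi (0:ℝ), DifferentiableAt ℝ φ v)
    (hinc : ∀ v : ℝ, 0 < v → 0 < v * deriv φ v ∧ v * deriv φ v ≤ φ v)
    (v vstar : ℝ) (hv : 0 < v) (hvstar : 0 < vstar) :
    φ v / φ vstar - 1 - Real.log (φ v / φ vstar) ≤ v / vstar - 1 - Real.log (v / vstar) := by
  have hdiffOn : DifferentiableOn ℝ φ (Ioi 0) := fun t ht => (hdiff t ht).differentiableWithinAt
  have hφ_pos : ∀ t, 0 < t → 0 < φ t := fun t ht => (hinc t ht).1.trans_le (hinc t ht).2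
  have hmono := monotoneOn_Ioi_of_mul_deriv_pos hdiffOn fun t ht => (hinc t ht).1
  have hanti := antitoneOn_Ioi_div_self_of_mul_deriv_le hdiffOn fun t ht => (hinc t ht).2
  have hφv := hφ_pos v hv
  have hφvstar := hφ_pos vstar hvstar
  have hcross : ∀ a b, 0 < a → a ≤ b → φ b * a ≤ φ a * b := fun a b ha hab => by
    have := hanti ha (ha.trans_le hab) hab
    rwa [div_le_div_iff₀ (ha.trans_le hab) ha] at this
  refine sub_one_sub_log_le_of_between (div_pos hφv hφvstar) (div_pos hv hvstar) ?_
  rcases le_total vstar v with hle | hle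
  · have hr_one : 1 ≤ φ v / φ vstar := (one_le_div hφvstar).2 (hmono hvstar hv hle)
    have hr_s : φ v / φ vstar ≤ v / vstar :=
      (div_le_div_iff₀ hφvstar hvstar).2 (by linarith [hcross vstar v hvstar hle])
    nlinarith
  · have hr_one : φ v / φ vstar ≤ 1 := (div_le_one hφvstar).2 (hmono hv hvstar hle)
    have hr_s : v / vstar ≤ φ v / φ vstar :=
      (div_le_div_iff₀ hvstar hφvstar).2 (by linarith [hcross v vstar hv hle])
    nlinarith
end
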